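/- arXiv:1703.03752 — 4 statements merged into one kernel-verified Lean document; each statement's English description precedes it below -/
import Mathlib

section
/- For every group Γ and every n ≥ 1, N^n(Γ) ⊆ EH^n_b(Γ): every bounded cohomology class with vanishing Gromov seminorm lies in the kernel of the comparison map. Equivalently, if z ∈ C^n_b(Γ)^Γ is a cocycle whose class in H^n_b(Γ) has Gromov seminorm 0, then z = δφ for some (possibly unbounded) Γ-invariant cochain φ ∈ C^{n−1}(Γ)^Γ. -/
/-!
Invariant `m`-cochains are the functions on the orbit space of `G` acting diagonally on
`G^{m+1}`, so `z = δφ` with `φ` invariant is a linear system over `ℝ` with one equation per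
`(m+2)`-tuple, each involving finitely many unknowns. Such a system is solvable as soon as every
finite linear relation `c` among the equations annihilates the right-hand side. If the class of `z`
has Gromov seminorm `0`, then `z = z' - δψ` with `ψ` invariant and `‖z'‖∞ ≤ ε` for any `ε > 0`;
the relation `c` kills `δψ` exactly and takes a value of size at most `‖c‖₁ ε` on `z'`, hence
it kills `z`.
-/
set_option linter.unusedSectionVars false
set_option linter.unusedVariables false

open scoped ENNReal

namespace BddCoh

variable (G : Type*) [Group G]

/-- Homogeneous real `n`-cochains on `G`: functions `G^{n+1} → ℝ`. -/
abbrev Cochain (n : ℕ) : Type _ := (Fin (n + 1) → G) → ℝ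

variable {G}

/-- Invariance of a homogeneous cochain under the diagonal left translation action. -/
def IsInvariant {n : ℕ} (φ : Cochain G n) : Prop :=
  ∀ (g : G) (x : Fin (n + 1) → G), φ (fun i => g * x i) = φ x

/-- Boundedness of a cochain. -/
def IsBoundedC {n : ℕ} (φ : Cochain G n) : Prop :=
  ∃ C : ℝ, ∀ x, |φ x| ≤ C

/-- The sup-norm of a cochain, valued in `[0,∞]`. -/
noncomputable def snorm {n : ℕ} (φ : Cochain G n) : ℝ≥0∞ :=
  ⨆ x : Fin (n + 1) → G, ENNReal.ofReal |φ x|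

/-- The homogeneous differential. -/
noncomputable def delta {n : ℕ} : Cochain G n →ₗ[ℝ] Cochain G (n + 1) where
  toFun φ := fun x => ∑ i : Fin (n + 2), (-1 : ℝ) ^ (i : ℕ) * φ (fun j => x (i.succAbove j))
  map_add' φ ψ := by
    funext x
    simp [mul_add, Finset.sum_add_distrib]
  map_smul' c φ := by
    funext x
    simp only [Pi.smul_apply, smul_eq_mul, RingHom.id_apply]
    rw [Finset.mul_sum]
    exact Finset.sum_congr rfl fun i _ => by ring

lemma IsInvariant.add {n : ℕ} {φ ψ : Cochain G n} (h1 : IsInvariant φ) (h2 : IsInvariant ψ) :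
    IsInvariant (φ + ψ) := fun g x => by
  simp only [Pi.add_apply, h1 g x, h2 g x]

lemma IsInvariant.smul {n : ℕ} (c : ℝ) {φ : Cochain G n} (h : IsInvariant φ) :
    IsInvariant (c • φ) := fun g x => by
  simp only [Pi.smul_apply, h g x]

lemma IsInvariant.zero {n : ℕ} : IsInvariant (0 : Cochain G n) := fun _ _ => rfl

lemma IsBoundedC.add {n : ℕ} {φ ψ : Cochain G n} : IsBoundedC φ → IsBoundedC ψ →
    IsBoundedC (φ + ψ)
  | ⟨C, hC⟩, ⟨D, hD⟩ => ⟨C + D, fun x => (abs_add_le (φ x) (ψ x)).trans (add_le_add (hC x) (hD x))⟩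

lemma IsBoundedC.smul {n : ℕ} (c : ℝ) {φ : Cochain G n} : IsBoundedC φ → IsBoundedC (c • φ)
  | ⟨C, hC⟩ => ⟨|c| * C, fun x => by
      have h : |(c • φ) x| = |c| * |φ x| := by
        simp [abs_mul]
      rw [h]
      exact mul_le_mul_of_nonneg_left (hC x) (abs_nonneg c)⟩

lemma IsBoundedC.zero {n : ℕ} : IsBoundedC (0 : Cochain G n) := ⟨0, fun x => by simp⟩

variable (G)

/-- The bounded invariant cocycles in degree `n`. -/
noncomputable def Zb (n : ℕ) : Submodule ℝ (Cochain G n) where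
  carrier := {z | IsBoundedC z ∧ IsInvariant z ∧ delta z = 0}
  add_mem' := by
    rintro a b ⟨hba, hia, hda⟩ ⟨hbb, hib, hdb⟩
    exact ⟨hba.add hbb, hia.add hib, by rw [map_add, hda, hdb, add_zero]⟩
  zero_mem' := ⟨IsBoundedC.zero, IsInvariant.zero, map_zero _⟩
  smul_mem' := by
    rintro c a ⟨hb, hi, hd⟩
    exact ⟨hb.smul c, hi.smul c, by rw [map_smul, hd, smul_zero]⟩

variable {G}

/-- Being the coboundary of a bounded invariant cochain (with the convention `C^{-1} = 0`). -/
def IsCobdry : ∀ {n : ℕ}, Cochain G n → Prop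
  | 0, ψ => ψ = 0
  | n + 1, ψ => ∃ φ : Cochain G n, IsBoundedC φ ∧ IsInvariant φ ∧ delta φ = ψ

lemma IsCobdry.add : ∀ {n : ℕ} {a b : Cochain G n}, IsCobdry a → IsCobdry b → IsCobdry (a + b)
  | 0, a, b, ha, hb => by
      show a + b = 0
      rw [show a = 0 from ha, show b = 0 from hb, add_zero]
  | n + 1, a, b, ⟨φ, h1, h2, h3⟩, ⟨ψ, g1, g2, g3⟩ =>
      ⟨φ + ψ, h1.add g1, h2.add g2, by rw [map_add, h3, g3]⟩

lemma IsCobdry.smul : ∀ {n : ℕ} (c : ℝ) {a : Cochain G n}, IsCobdry a → IsCobdry (c • a)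
  | 0, c, a, ha => by
      show c • a = 0
      rw [show a = 0 from ha, smul_zero]
  | n + 1, c, a, ⟨φ, h1, h2, h3⟩ => ⟨c • φ, h1.smul c, h2.smul c, by rw [map_smul, h3]⟩

lemma IsCobdry.zero : ∀ {n : ℕ}, IsCobdry (0 : Cochain G n)
  | 0 => rfl
  | n + 1 => ⟨0, IsBoundedC.zero, IsInvariant.zero, map_zero _⟩

variable (G)

/-- The coboundaries, as a submodule of the cocycles. -/
noncomputable def Bb (n : ℕ) : Submodule ℝ (Zb G n) where
  carrier := {z | IsCobdry (z : Cochain G n)}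
  add_mem' := by
    intro a b ha hb
    show IsCobdry ((a + b : Zb G n) : Cochain G n)
    rw [Submodule.coe_add]
    exact ha.add hb
  zero_mem' := by
    show IsCobdry ((0 : Zb G n) : Cochain G n)
    rw [ZeroMemClass.coe_zero]
    exact IsCobdry.zero
  smul_mem' := by
    intro c a ha
    show IsCobdry ((c • a : Zb G n) : Cochain G n)
    rw [Submodule.coe_smul]
    exact ha.smul c

/-- Bounded cohomology of `G` in degree `n` (with trivial real coefficients), computed from
the complex of bounded invariant homogeneous cochains. -/
abbrev Hb (n : ℕ) := Zb G n ⧸ Bb G n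

variable {G}

/-- The bounded cohomology class of a bounded invariant cocycle. -/
noncomputable abbrev mkH {n : ℕ} (z : Zb G n) : Hb G n := (Bb G n).mkQ z

lemma mkH_zero {n : ℕ} : mkH (0 : Zb G n) = 0 := map_zero (Bb G n).mkQ

lemma mkH_add {n : ℕ} (y z : Zb G n) : mkH (y + z) = mkH y + mkH z := map_add (Bb G n).mkQ y z

lemma mkH_smul {n : ℕ} (c : ℝ) (z : Zb G n) : mkH (c • z) = c • mkH z :=
  map_smul (Bb G n).mkQ c z

/-- The Gromov seminorm (canonical `ℓ^∞`-seminorm) on bounded cohomology, in `[0,∞]`. -/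
noncomputable def gnorm {n : ℕ} (α : Hb G n) : ℝ≥0∞ :=
  sInf {r | ∃ z : Zb G n, mkH z = α ∧ snorm (z : Cochain G n) = r}

lemma snorm_zero {n : ℕ} : snorm (0 : Cochain G n) = 0 :=
  le_antisymm (iSup_le fun x => by simp) zero_le

lemma snorm_add_le {n : ℕ} (φ ψ : Cochain G n) : snorm (φ + ψ) ≤ snorm φ + snorm ψ := by
  refine iSup_le fun x => ?_
  calc ENNReal.ofReal |(φ + ψ) x| ≤ ENNReal.ofReal (|φ x| + |ψ x|) :=
        ENNReal.ofReal_le_ofReal (abs_add_le (φ x) (ψ x))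
    _ = ENNReal.ofReal |φ x| + ENNReal.ofReal |ψ x| :=
        ENNReal.ofReal_add (abs_nonneg _) (abs_nonneg _)
    _ ≤ snorm φ + snorm ψ :=
        add_le_add (le_iSup (fun x => ENNReal.ofReal |φ x|) x)
          (le_iSup (fun x => ENNReal.ofReal |ψ x|) x)

lemma snorm_smul_le {n : ℕ} (c : ℝ) (φ : Cochain G n) :
    snorm (c • φ) ≤ ENNReal.ofReal |c| * snorm φ := by
  refine iSup_le fun x => ?_
  have h : |(c • φ) x| = |c| * |φ x| := by simp [abs_mul]
  rw [h, ENNReal.ofReal_mul (abs_nonneg c)]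
  exact mul_le_mul_right (le_iSup (fun x => ENNReal.ofReal |φ x|) x) _

lemma gnorm_le_snorm {n : ℕ} (z : Zb G n) : gnorm (mkH z) ≤ snorm (z : Cochain G n) :=
  sInf_le ⟨z, rfl, rfl⟩

lemma gnorm_zero {n : ℕ} : gnorm (0 : Hb G n) = 0 := by
  refine le_antisymm ?_ zero_le
  have h := gnorm_le_snorm (0 : Zb G n)
  rw [mkH_zero] at h
  simpa [snorm_zero] using h

lemma exists_gnorm_rep {n : ℕ} {α : Hb G n} (h : gnorm α = 0) {ε : ℝ≥0∞} (hε : 0 < ε) :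
    ∃ z : Zb G n, mkH z = α ∧ snorm (z : Cochain G n) < ε := by
  have h2 : gnorm α < ε := by rw [h]; exact hε
  rw [gnorm] at h2
  obtain ⟨r, ⟨z, hz, hr⟩, hlt⟩ := sInf_lt_iff.mp h2
  exact ⟨z, hz, hr ▸ hlt⟩

variable (G)

/-- The subspace of classes with vanishing Gromov seminorm. -/
noncomputable def NG (n : ℕ) : Submodule ℝ (Hb G n) where
  carrier := {α | gnorm α = 0}
  zero_mem' := gnorm_zero
  add_mem' := by
    intro a b ha hb
    show gnorm (a + b) = 0
    refine le_antisymm ?_ zero_le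
    refine ENNReal.le_of_forall_pos_le_add fun ε hε _ => ?_
    have hε2 : (0 : ℝ≥0∞) < (ε : ℝ≥0∞) / 2 :=
      ENNReal.half_pos (by exact_mod_cast hε.ne')
    obtain ⟨z₁, h₁, s₁⟩ := exists_gnorm_rep ha hε2
    obtain ⟨z₂, h₂, s₂⟩ := exists_gnorm_rep hb hε2
    have hmk : mkH (z₁ + z₂) = a + b := by rw [mkH_add, h₁, h₂]
    calc gnorm (a + b) ≤ snorm ((z₁ + z₂ : Zb G n) : Cochain G n) := hmk ▸ gnorm_le_snorm _
      _ = snorm ((z₁ : Cochain G n) + (z₂ : Cochain G n)) := by rw [Submodule.coe_add]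
      _ ≤ snorm (z₁ : Cochain G n) + snorm (z₂ : Cochain G n) := snorm_add_le _ _
      _ ≤ (ε : ℝ≥0∞) / 2 + (ε : ℝ≥0∞) / 2 := add_le_add s₁.le s₂.le
      _ = (ε : ℝ≥0∞) := ENNReal.add_halves _
      _ ≤ 0 + ε := by rw [zero_add]
  smul_mem' := by
    intro c a ha
    show gnorm (c • a) = 0
    by_cases hc : c = 0
    · subst hc
      rw [zero_smul]
      exact gnorm_zero
    refine le_antisymm ?_ zero_le
    refine ENNReal.le_of_forall_pos_le_add fun ε hε _ => ?_
    have hM0 : ENNReal.ofReal |c| ≠ 0 := by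
      rw [Ne, ENNReal.ofReal_eq_zero, not_le]
      exact abs_pos.mpr hc
    have hMt : ENNReal.ofReal |c| ≠ ⊤ := ENNReal.ofReal_ne_top
    have hδ : (0 : ℝ≥0∞) < (ε : ℝ≥0∞) / ENNReal.ofReal |c| :=
      ENNReal.div_pos (by exact_mod_cast hε.ne') hMt
    obtain ⟨z, hz, hs⟩ := exists_gnorm_rep ha hδ
    have hmk : mkH (c • z) = c • a := by rw [mkH_smul, hz]
    calc gnorm (c • a) ≤ snorm ((c • z : Zb G n) : Cochain G n) := hmk ▸ gnorm_le_snorm _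
      _ = snorm (c • (z : Cochain G n)) := by rw [Submodule.coe_smul]
      _ ≤ ENNReal.ofReal |c| * snorm (z : Cochain G n) := snorm_smul_le c _
      _ ≤ ENNReal.ofReal |c| * ((ε : ℝ≥0∞) / ENNReal.ofReal |c|) := mul_le_mul_right hs.le _
      _ = (ε : ℝ≥0∞) := ENNReal.mul_div_cancel hM0 hMt
      _ ≤ 0 + ε := by rw [zero_add]

variable {G}

/-- Having an invariant (possibly unbounded) primitive (with the convention `C^{-1} = 0`). -/
def HasInvPrimitive : ∀ {n : ℕ}, Cochain G n → Prop
  | 0, ψ => ψ = 0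
  | n + 1, ψ => ∃ φ : Cochain G n, IsInvariant φ ∧ delta φ = ψ

/-- A bounded cohomology class is exact if it lies in the kernel of the comparison map, i.e. if
it is represented by the coboundary of an invariant (possibly unbounded) cochain. -/
def IsExact {n : ℕ} (α : Hb G n) : Prop :=
  ∃ z : Zb G n, mkH z = α ∧ HasInvPrimitive (z : Cochain G n)

/-- Values `‖δφ‖_∞` over invariant primitives `φ` of representatives of `α` vanishing on
`S^{n}` (with the convention `C^{-1} = 0` in degree `0`). -/
def bahSet : ∀ {n : ℕ}, Set G → Hb G n → Set ℝ≥0∞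
  | 0, _, α => {r | α = 0 ∧ r = 0}
  | n + 1, S, α =>
      {r | ∃ φ : Cochain G n, IsInvariant φ ∧
        (∀ x : Fin (n + 1) → G, (∀ i, x i ∈ S) → φ x = 0) ∧
        (∃ z : Zb G (n + 1), (z : Cochain G (n + 1)) = delta φ ∧ mkH z = α) ∧
        snorm (delta φ) = r}

/-- The seminorm `‖α‖_S`. -/
noncomputable def normS {n : ℕ} (S : Set G) (α : Hb G n) : ℝ≥0∞ :=
  sInf (bahSet S α)

/-- The seminorm `‖α‖_bah = sup_S ‖α‖_S`, the supremum running over all finite `S ⊆ G`. -/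
noncomputable def bah {n : ℕ} (α : Hb G n) : ℝ≥0∞ :=
  ⨆ S : Finset G, normS (S : Set G) α

lemma normS_le {n : ℕ} {S : Set G} {α : Hb G (n + 1)} {φ : Cochain G n}
    (h1 : IsInvariant φ) (h2 : ∀ x : Fin (n + 1) → G, (∀ i, x i ∈ S) → φ x = 0)
    (h3 : ∃ z : Zb G (n + 1), (z : Cochain G (n + 1)) = delta φ ∧ mkH z = α) :
    normS S α ≤ snorm (delta φ) :=
  sInf_le ⟨φ, h1, h2, h3, rfl⟩

lemma normS_le_bah {n : ℕ} (S : Finset G) (α : Hb G n) : normS (S : Set G) α ≤ bah α :=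
  le_iSup (fun S : Finset G => normS (S : Set G) α) S

lemma bah_zero : ∀ {n : ℕ}, bah (0 : Hb G n) = 0 := by
  intro n
  refine le_antisymm (iSup_le fun S => ?_) zero_le
  cases n with
  | zero =>
      refine le_trans (sInf_le ?_) le_rfl
      exact ⟨rfl, rfl⟩
  | succ n =>
      have h := normS_le (α := (0 : Hb G (n + 1))) (S := (S : Set G))
        (φ := (0 : Cochain G n)) IsInvariant.zero (fun x _ => rfl)
        ⟨0, by rw [ZeroMemClass.coe_zero, map_zero], map_zero _⟩
      rw [map_zero, snorm_zero] at h
      exact h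

lemma eq_zero_of_bah_zero₀ {α : Hb G 0} (h : bah α = 0) : α = 0 := by
  by_contra hα
  have hS : normS ((∅ : Finset G) : Set G) α = ⊤ := by
    rw [normS]
    suffices hE : bahSet ((∅ : Finset G) : Set G) α = ∅ by rw [hE, sInf_empty]
    ext r
    simp only [bahSet, Set.mem_setOf_eq, Set.mem_empty_iff_false, iff_false, not_and]
    intro h0
    exact absurd h0 hα
  have := normS_le_bah (∅ : Finset G) α
  rw [hS, h] at this
  exact absurd (top_le_iff.mp this).symm (by simp)

lemma normS_eq_zero_of_bah {n : ℕ} {α : Hb G n} (h : bah α = 0) (S : Finset G) :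
    normS (S : Set G) α = 0 :=
  le_antisymm (h ▸ normS_le_bah S α) zero_le

lemma exists_bah_rep {n : ℕ} {α : Hb G (n + 1)} (h : bah α = 0) (S : Finset G)
    {ε : ℝ≥0∞} (hε : 0 < ε) :
    ∃ φ : Cochain G n, IsInvariant φ ∧
      (∀ x : Fin (n + 1) → G, (∀ i, x i ∈ (S : Set G)) → φ x = 0) ∧
      (∃ z : Zb G (n + 1), (z : Cochain G (n + 1)) = delta φ ∧ mkH z = α) ∧
      snorm (delta φ) < ε := by
  have h2 : normS ((S : Set G)) α < ε := by
    rw [normS_eq_zero_of_bah h S]; exact hε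
  rw [normS] at h2
  obtain ⟨r, hr, hlt⟩ := sInf_lt_iff.mp h2
  obtain ⟨φ, h1, h2', h3, h4⟩ := hr
  exact ⟨φ, h1, h2', h3, h4 ▸ hlt⟩

variable (G)

/-- The subspace `N^n_0` of exact classes with vanishing `‖·‖_bah`-seminorm. -/
noncomputable def N0 (n : ℕ) : Submodule ℝ (Hb G n) where
  carrier := {α | bah α = 0}
  zero_mem' := bah_zero
  add_mem' := by
    intro a b ha hb
    show bah (a + b) = 0
    cases n with
    | zero =>
        rw [eq_zero_of_bah_zero₀ ha, eq_zero_of_bah_zero₀ hb, add_zero]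
        exact bah_zero
    | succ n =>
        refine le_antisymm (iSup_le fun S => ?_) zero_le
        refine ENNReal.le_of_forall_pos_le_add fun ε hε _ => ?_
        have hε2 : (0 : ℝ≥0∞) < (ε : ℝ≥0∞) / 2 :=
          ENNReal.half_pos (by exact_mod_cast hε.ne')
        obtain ⟨φ₁, i₁, v₁, ⟨z₁, hz₁, hm₁⟩, s₁⟩ := exists_bah_rep ha S hε2
        obtain ⟨φ₂, i₂, v₂, ⟨z₂, hz₂, hm₂⟩, s₂⟩ := exists_bah_rep hb S hε2
        have hsum : normS (S : Set G) (a + b) ≤ snorm (delta (φ₁ + φ₂)) := by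
          refine normS_le (i₁.add i₂) (fun x hx => ?_) ⟨z₁ + z₂, ?_, ?_⟩
          · simp only [Pi.add_apply, v₁ x hx, v₂ x hx, add_zero]
          · rw [Submodule.coe_add, hz₁, hz₂, map_add]
          · rw [mkH_add, hm₁, hm₂]
        refine hsum.trans ?_
        calc snorm (delta (φ₁ + φ₂)) = snorm (delta φ₁ + delta φ₂) := by rw [map_add]
          _ ≤ snorm (delta φ₁) + snorm (delta φ₂) := snorm_add_le _ _
          _ ≤ (ε : ℝ≥0∞) / 2 + (ε : ℝ≥0∞) / 2 := add_le_add s₁.le s₂.le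
          _ = (ε : ℝ≥0∞) := ENNReal.add_halves _
          _ ≤ 0 + ε := by rw [zero_add]
  smul_mem' := by
    intro c a ha
    show bah (c • a) = 0
    by_cases hc : c = 0
    · subst hc
      rw [zero_smul]
      exact bah_zero
    cases n with
    | zero =>
        rw [eq_zero_of_bah_zero₀ ha, smul_zero]
        exact bah_zero
    | succ n =>
        refine le_antisymm (iSup_le fun S => ?_) zero_le
        refine ENNReal.le_of_forall_pos_le_add fun ε hε _ => ?_
        have hM0 : ENNReal.ofReal |c| ≠ 0 := by
          rw [Ne, ENNReal.ofReal_eq_zero, not_le]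
          exact abs_pos.mpr hc
        have hMt : ENNReal.ofReal |c| ≠ ⊤ := ENNReal.ofReal_ne_top
        have hδ : (0 : ℝ≥0∞) < (ε : ℝ≥0∞) / ENNReal.ofReal |c| :=
          ENNReal.div_pos (by exact_mod_cast hε.ne') hMt
        obtain ⟨φ, hi, hv, ⟨z, hz, hm⟩, hs⟩ := exists_bah_rep ha S hδ
        have hle : normS (S : Set G) (c • a) ≤ snorm (delta (c • φ)) := by
          refine normS_le (hi.smul c) (fun x hx => ?_) ⟨c • z, ?_, ?_⟩
          · simp only [Pi.smul_apply, hv x hx, smul_zero]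
          · rw [Submodule.coe_smul, hz, map_smul]
          · rw [mkH_smul, hm]
        refine hle.trans ?_
        calc snorm (delta (c • φ)) = snorm (c • delta φ) := by rw [map_smul]
          _ ≤ ENNReal.ofReal |c| * snorm (delta φ) := snorm_smul_le c _
          _ ≤ ENNReal.ofReal |c| * ((ε : ℝ≥0∞) / ENNReal.ofReal |c|) :=
              mul_le_mul_right hs.le _
          _ = (ε : ℝ≥0∞) := ENNReal.mul_div_cancel hM0 hMt
          _ ≤ 0 + ε := by rw [zero_add]


end BddCoh

open BddCoh

open Finsupp

theorem exists_linearCombination_eq_of_ker_le {K ι κ : Type*} [Field K] (a : ι → κ →₀ K)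
    (b : ι → K)
    (h : ∀ c : ι →₀ K, linearCombination K a c = 0 → linearCombination K b c = 0) :
    ∃ f : κ → K, ∀ i, linearCombination K f (a i) = b i := by
  have hb : linearCombination K b ∈ (LinearMap.ker (linearCombination K a)).dualAnnihilator :=
    (Submodule.mem_dualAnnihilator _).mpr h
  obtain ⟨g, hg⟩ := (LinearMap.range_dualMap_eq_dualAnnihilator_ker _).ge hb
  have hgf : linearCombination K (fun u => g (single u 1)) = g :=
    lhom_ext fun u r => by rw [linearCombination_single, ← map_smul, smul_single_one]
  refine ⟨fun u => g (single u 1), fun i => ?_⟩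
  simpa [hgf] using LinearMap.congr_fun hg (single i 1)

theorem abs_linearCombination_le {ι : Type*} (c : ι →₀ ℝ) {w : ι → ℝ} {ε : ℝ}
    (hw : ∀ i, |w i| ≤ ε) : |linearCombination ℝ w c| ≤ (c.sum fun _ r => |r|) * ε := by
  rw [linearCombination_apply, Finsupp.sum, Finsupp.sum, Finset.sum_mul]
  refine (Finset.abs_sum_le_sum_abs _ _).trans (Finset.sum_le_sum fun i _ => ?_)
  rw [smul_eq_mul, abs_mul]
  exact mul_le_mul_of_nonneg_left (hw i) (abs_nonneg _)

namespace BddCoh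

variable {G : Type*} [Group G] {m : ℕ}

variable (G m) in
abbrev Orbits := MulAction.orbitRel.Quotient G (Fin (m + 1) → G)

theorem isInvariant_comp_mk (f : Orbits G m → ℝ) : IsInvariant (f ∘ Quotient.mk _) :=
  fun g x => congrArg f (Quotient.sound ⟨g, rfl⟩)

theorem IsInvariant.exists_eq_comp_mk {ψ : Cochain G m} (hψ : IsInvariant ψ) :
    ∃ f : Orbits G m → ℝ, ψ = f ∘ Quotient.mk _ := by
  refine ⟨Quotient.lift ψ fun a b hab => ?_, rfl⟩
  obtain ⟨g, rfl⟩ := MulAction.orbitRel_apply.mp hab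
  exact hψ g b

/-- The equation `δφ (x) = z (x)` for `φ = f ∘ Quotient.mk _`, as a linear form in `f`. -/
noncomputable def deltaRow (x : Fin (m + 2) → G) : Orbits G m →₀ ℝ :=
  ∑ i : Fin (m + 2), single (Quotient.mk _ fun j => x (i.succAbove j)) ((-1 : ℝ) ^ (i : ℕ))

theorem linearCombination_deltaRow (f : Orbits G m → ℝ) (x : Fin (m + 2) → G) :
    linearCombination ℝ f (deltaRow x) = delta (f ∘ Quotient.mk _) x := by
  simp only [deltaRow, map_sum, linearCombination_single, smul_eq_mul]
  rfl

theorem IsInvariant.linearCombination_delta_eq_zero {ψ : Cochain G m} (hψ : IsInvariant ψ)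
    {c : (Fin (m + 2) → G) →₀ ℝ} (hc : linearCombination ℝ deltaRow c = 0) :
    linearCombination ℝ (delta ψ) c = 0 := by
  obtain ⟨f, rfl⟩ := hψ.exists_eq_comp_mk
  have hrows : delta (f ∘ Quotient.mk _) = linearCombination ℝ f ∘ deltaRow :=
    funext fun x => (linearCombination_deltaRow f x).symm
  rw [hrows, ← apply_linearCombination, hc, map_zero]

theorem exists_rep_abs_le_of_gnorm_eq_zero {n : ℕ} {α : Hb G n} (h : gnorm α = 0) {ε : ℝ}
    (hε : 0 < ε) : ∃ z : Zb G n, mkH z = α ∧ ∀ x, |(z : Cochain G n) x| ≤ ε := by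
  obtain ⟨z, hz, hs⟩ := exists_gnorm_rep h (ENNReal.ofReal_pos.mpr hε)
  refine ⟨z, hz, fun x => ?_⟩
  have hx := (le_iSup (fun x => ENNReal.ofReal |(z : Cochain G n) x|) x).trans_lt hs
  exact ((ENNReal.ofReal_lt_ofReal_iff hε).mp hx).le

theorem exists_isInvariant_delta_eq_sub_of_mkH_eq {y z : Zb G (m + 1)} (h : mkH y = mkH z) :
    ∃ ψ : Cochain G m, IsInvariant ψ ∧ delta ψ = (y : Cochain G (m + 1)) - z := by
  obtain ⟨ψ, -, hψ, hδ⟩ : IsCobdry ((y - z : Zb G (m + 1)) : Cochain G (m + 1)) :=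
    (Submodule.Quotient.eq _).mp h
  exact ⟨ψ, hψ, hδ⟩

theorem linearCombination_eq_zero_of_gnorm_eq_zero {z : Zb G (m + 1)} (hz : gnorm (mkH z) = 0)
    {c : (Fin (m + 2) → G) →₀ ℝ} (hc : linearCombination ℝ deltaRow c = 0) :
    linearCombination ℝ (z : Cochain G (m + 1)) c = 0 := by
  set C := c.sum fun _ r => |r|
  have hC : 0 ≤ C := Finset.sum_nonneg fun _ _ => abs_nonneg _
  refine abs_nonpos_iff.mp (le_of_forall_pos_le_add fun ε hε => ?_)
  obtain ⟨z', hz', hsmall⟩ :=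
    exists_rep_abs_le_of_gnorm_eq_zero hz (by positivity : 0 < ε / (C + 1))
  obtain ⟨ψ, hψ, hδ⟩ := exists_isInvariant_delta_eq_sub_of_mkH_eq hz'
  have hz_eq : (z : Cochain G (m + 1)) = z' - delta ψ := by rw [hδ, sub_sub_cancel]
  have hsplit : linearCombination ℝ (z : Cochain G (m + 1)) c
      = linearCombination ℝ (z' : Cochain G (m + 1)) c - linearCombination ℝ (delta ψ) c := by
    simp only [hz_eq, linearCombination_apply, Pi.sub_apply, smul_sub, Finsupp.sum_sub]
  rw [hsplit, hψ.linearCombination_delta_eq_zero hc, sub_zero, zero_add]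
  calc |linearCombination ℝ (z' : Cochain G (m + 1)) c| ≤ C * (ε / (C + 1)) :=
        abs_linearCombination_le c hsmall
    _ ≤ ε := by rw [mul_div_assoc', div_le_iff₀ (by positivity)]; nlinarith

theorem hasInvPrimitive_of_gnorm_eq_zero {z : Zb G (m + 1)} (hz : gnorm (mkH z) = 0) :
    HasInvPrimitive (z : Cochain G (m + 1)) := by
  obtain ⟨f, hf⟩ := exists_linearCombination_eq_of_ker_le deltaRow (z : Cochain G (m + 1))
    fun c hc => linearCombination_eq_zero_of_gnorm_eq_zero hz hc
  exact ⟨f ∘ Quotient.mk _, isInvariant_comp_mk f,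
    funext fun x => (linearCombination_deltaRow f x).symm.trans (hf x)⟩

end BddCoh

/-- In every degree `n ≥ 1`, classes of vanishing Gromov seminorm are exact: they lie in the
kernel of the comparison map.  Equivalently, any bounded invariant cocycle `z` whose class has
vanishing Gromov seminorm is the coboundary of a (possibly unbounded) invariant cochain. -/
theorem NGromov_subset_exact (Γ : Type*) [Group Γ] (n : ℕ) (hn : 1 ≤ n) :
    (∀ α : Hb Γ n, gnorm α = 0 → IsExact α) ∧
      (∀ z : Zb Γ n, gnorm (mkH z) = 0 → HasInvPrimitive (z : Cochain Γ n)) := by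
  obtain ⟨m, rfl⟩ : ∃ m, n = m + 1 := ⟨n - 1, (Nat.sub_add_cancel hn).symm⟩
  refine ⟨fun α hα => ?_, fun z hz => hasInvPrimitive_of_gnorm_eq_zero hz⟩
  obtain ⟨z, rfl⟩ := Submodule.mkQ_surjective _ α
  exact ⟨z, rfl, hasInvPrimitive_of_gnorm_eq_zero hα⟩
end

section
/- Let Γ be a group acting freely on a set X (every nontrivial element acts without fixed points). For a basepoint x ∈ X define w^n_x : C^n_b(Γ↷X) → C^n_b(Γ) by w^n_x(φ)(g₀,…,g_n) = φ(g₀x,…,g_nx). Then for every n ≥ 0 and every x ∈ X, the chain map w^•_x restricts to invariant cochains and induces an isometric isomorphism H^n_b(Γ↷X) → H^n_b(Γ): a linear bijection preserving the induced sup-seminorms on cohomology. -/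
set_option linter.unusedSectionVars false
set_option linter.unusedVariables false

open scoped ENNReal

namespace BddCohAct

/-- Homogeneous real `n`-cochains on a set `Y`: functions `Y^{n+1} → ℝ`. -/
abbrev Cochain (Y : Type*) (n : ℕ) : Type _ := (Fin (n + 1) → Y) → ℝ

variable (G X : Type*) [Group G] [MulAction G X]

/-- Invariance of a homogeneous cochain under the diagonal action of `G`. -/
def IsInvariant {n : ℕ} (φ : Cochain X n) : Prop :=
  ∀ (g : G) (x : Fin (n + 1) → X), φ (fun i => g • x i) = φ x

variable {G X}

/-- Boundedness of a cochain. -/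
def IsBoundedC {n : ℕ} (φ : Cochain X n) : Prop :=
  ∃ C : ℝ, ∀ x, |φ x| ≤ C

/-- The sup-norm of a cochain, valued in `[0,∞]`. -/
noncomputable def snorm {n : ℕ} (φ : Cochain X n) : ℝ≥0∞ :=
  ⨆ x : Fin (n + 1) → X, ENNReal.ofReal |φ x|

/-- The homogeneous differential. -/
noncomputable def delta {n : ℕ} : Cochain X n →ₗ[ℝ] Cochain X (n + 1) where
  toFun φ := fun x => ∑ i : Fin (n + 2), (-1 : ℝ) ^ (i : ℕ) * φ (fun j => x (i.succAbove j))
  map_add' φ ψ := by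
    funext x
    simp [mul_add, Finset.sum_add_distrib]
  map_smul' c φ := by
    funext x
    simp only [Pi.smul_apply, smul_eq_mul, RingHom.id_apply]
    rw [Finset.mul_sum]
    exact Finset.sum_congr rfl fun i _ => by ring

lemma IsInvariant.add {n : ℕ} {φ ψ : Cochain X n} (h1 : IsInvariant G X φ)
    (h2 : IsInvariant G X ψ) : IsInvariant G X (φ + ψ) := fun g x => by
  simp only [Pi.add_apply, h1 g x, h2 g x]

lemma IsInvariant.smul {n : ℕ} (c : ℝ) {φ : Cochain X n} (h : IsInvariant G X φ) :
    IsInvariant G X (c • φ) := fun g x => by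
  simp only [Pi.smul_apply, h g x]

lemma IsInvariant.zero {n : ℕ} : IsInvariant G X (0 : Cochain X n) := fun _ _ => rfl

lemma IsBoundedC.add {n : ℕ} {φ ψ : Cochain X n} :
    IsBoundedC φ → IsBoundedC ψ → IsBoundedC (φ + ψ)
  | ⟨C, hC⟩, ⟨D, hD⟩ => ⟨C + D, fun x => (abs_add_le (φ x) (ψ x)).trans (add_le_add (hC x) (hD x))⟩

lemma IsBoundedC.smul {n : ℕ} (c : ℝ) {φ : Cochain X n} :
    IsBoundedC φ → IsBoundedC (c • φ)
  | ⟨C, hC⟩ => ⟨|c| * C, fun x => by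
      have h : |(c • φ) x| = |c| * |φ x| := by simp [abs_mul]
      rw [h]
      exact mul_le_mul_of_nonneg_left (hC x) (abs_nonneg c)⟩

lemma IsBoundedC.zero {n : ℕ} : IsBoundedC (0 : Cochain X n) :=
  ⟨0, fun x => by simp⟩

variable (G X)

/-- The bounded `G`-invariant cocycles on `X` in degree `n`. -/
noncomputable def Zb (n : ℕ) : Submodule ℝ (Cochain X n) where
  carrier := {z | IsBoundedC z ∧ IsInvariant G X z ∧ delta z = 0}
  add_mem' := by
    rintro a b ⟨hba, hia, hda⟩ ⟨hbb, hib, hdb⟩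
    exact ⟨hba.add hbb, hia.add hib, by rw [map_add, hda, hdb, add_zero]⟩
  zero_mem' := ⟨IsBoundedC.zero, IsInvariant.zero, map_zero _⟩
  smul_mem' := by
    rintro c a ⟨hb, hi, hd⟩
    exact ⟨hb.smul c, hi.smul c, by rw [map_smul, hd, smul_zero]⟩

/-- Being the coboundary of a bounded invariant cochain (with the convention `C^{-1} = 0`). -/
def IsCobdry : ∀ {n : ℕ}, Cochain X n → Prop
  | 0, ψ => ψ = 0
  | n + 1, ψ => ∃ φ : Cochain X n, IsBoundedC φ ∧ IsInvariant G X φ ∧ delta φ = ψ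

variable {G X}

lemma IsCobdry.add : ∀ {n : ℕ} {a b : Cochain X n},
    IsCobdry G X a → IsCobdry G X b → IsCobdry G X (a + b)
  | 0, a, b, ha, hb => by
      show a + b = 0
      rw [show a = 0 from ha, show b = 0 from hb, add_zero]
  | n + 1, a, b, ⟨φ, h1, h2, h3⟩, ⟨ψ, g1, g2, g3⟩ =>
      ⟨φ + ψ, h1.add g1, h2.add g2, by rw [map_add, h3, g3]⟩

lemma IsCobdry.smul : ∀ {n : ℕ} (c : ℝ) {a : Cochain X n},
    IsCobdry G X a → IsCobdry G X (c • a)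
  | 0, c, a, ha => by
      show c • a = 0
      rw [show a = 0 from ha, smul_zero]
  | n + 1, c, a, ⟨φ, h1, h2, h3⟩ => ⟨c • φ, h1.smul c, h2.smul c, by rw [map_smul, h3]⟩

lemma IsCobdry.zero : ∀ {n : ℕ}, IsCobdry G X (0 : Cochain X n)
  | 0 => rfl
  | n + 1 => ⟨0, IsBoundedC.zero, IsInvariant.zero, map_zero _⟩

variable (G X)

/-- The coboundaries, as a submodule of the cocycles. -/
noncomputable def Bb (n : ℕ) : Submodule ℝ (Zb G X n) where
  carrier := {z | IsCobdry G X (z : Cochain X n)}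
  add_mem' := by
    intro a b ha hb
    show IsCobdry G X ((a + b : Zb G X n) : Cochain X n)
    rw [Submodule.coe_add]
    exact ha.add hb
  zero_mem' := by
    show IsCobdry G X ((0 : Zb G X n) : Cochain X n)
    rw [ZeroMemClass.coe_zero]
    exact IsCobdry.zero
  smul_mem' := by
    intro c a ha
    show IsCobdry G X ((c • a : Zb G X n) : Cochain X n)
    rw [Submodule.coe_smul]
    exact ha.smul c

/-- The bounded cohomology `H^n_b(G ↷ X)` of the action of `G` on `X`. -/
abbrev Hb (n : ℕ) := Zb G X n ⧸ Bb G X n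

variable {G X}

/-- The bounded cohomology class of a bounded invariant cocycle. -/
noncomputable abbrev mkH {n : ℕ} (z : Zb G X n) : Hb G X n := (Bb G X n).mkQ z

/-- The canonical `ℓ^∞`-seminorm on bounded cohomology, in `[0,∞]`. -/
noncomputable def gnorm {n : ℕ} (α : Hb G X n) : ℝ≥0∞ :=
  sInf {r | ∃ z : Zb G X n, mkH z = α ∧ snorm (z : Cochain X n) = r}

/-- The cochain map `w_x` given by evaluation along the orbit of the basepoint `x`. -/
def wmap (x : X) {n : ℕ} (φ : Cochain X n) : Cochain G n :=
  fun gs => φ fun i => gs i • x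

lemma delta_wmap (x : X) {n : ℕ} (φ : Cochain X n) :
    delta (wmap (G := G) x φ) = wmap x (delta φ) := rfl

lemma IsBoundedC.wmap {x : X} {n : ℕ} {φ : Cochain X n} :
    IsBoundedC φ → IsBoundedC (BddCohAct.wmap (G := G) x φ)
  | ⟨C, hC⟩ => ⟨C, fun gs => hC _⟩

lemma IsInvariant.wmap {x : X} {n : ℕ} {φ : Cochain X n} (h : IsInvariant G X φ) :
    IsInvariant G G (BddCohAct.wmap x φ) := by
  intro g gs
  show φ (fun i => (g * gs i) • x) = φ (fun i => gs i • x)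
  have he : (fun i => (g * gs i) • x) = fun i => g • (gs i • x) :=
    funext fun i => mul_smul g (gs i) x
  rw [he]
  exact h g _

/-- `w_x` on bounded invariant cocycles. -/
noncomputable def wZ (x : X) (n : ℕ) : Zb G X n →ₗ[ℝ] Zb G G n where
  toFun z := ⟨wmap x (z : Cochain X n), by
    obtain ⟨hb, hi, hd⟩ := z.2
    refine ⟨hb.wmap, hi.wmap, ?_⟩
    rw [delta_wmap, hd]
    rfl⟩
  map_add' z w := Subtype.ext rfl
  map_smul' c z := Subtype.ext rfl

lemma wZ_mem_Bb (x : X) :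
    ∀ {n : ℕ} (z : Zb G X n), z ∈ Bb G X n → wZ x n z ∈ Bb G G n
  | 0, z, hz => by
      show wmap x (z : Cochain X 0) = 0
      rw [show (z : Cochain X 0) = 0 from hz]
      rfl
  | n + 1, z, ⟨φ, h1, h2, h3⟩ =>
      ⟨wmap x φ, h1.wmap, h2.wmap, by rw [delta_wmap, h3]; rfl⟩

/-- The map `H^n_b(G ↷ X) → H^n_b(G)` induced by `w_x`. -/
noncomputable def Hw (x : X) (n : ℕ) : Hb G X n →ₗ[ℝ] Hb G G n :=
  Submodule.mapQ (Bb G X n) (Bb G G n) (wZ x n) fun z hz => wZ_mem_Bb x z hz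

end BddCohAct

/-! The pullback of cochains along the orbit map `g ↦ g • x` is `w_x`. Since the action is free,
choosing a point in each orbit gives an equivariant map `p : X → Γ`, which can be normalised so
that `p (g • x) = g`; then pullback along `p` is a right inverse of `w_x` already on cochains. It is
also a left inverse in cohomology: pullbacks along any two equivariant maps `f₁ f₂ : Y → Z` are
homotopic through the prism operator `φ ↦ ∑ₖ (-1)ᵏ φ (f₂ y₀, …, f₂ yₖ, f₁ yₖ, …, f₁ yₙ)`, which
preserves bounded invariant cochains. Pullbacks do not increase the sup-norm, so both maps are
norm-nonincreasing and `w_x` is isometric. -/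

namespace BddCohAct

open Finset

section Pullback

variable {G W Y Z : Type*} [Group G] [MulAction G W] [MulAction G Y] [MulAction G Z]

def pullback (f : Y → Z) {n : ℕ} (φ : Cochain Z n) : Cochain Y n :=
  fun y => φ fun i => f (y i)

lemma delta_pullback (f : Y → Z) {n : ℕ} (φ : Cochain Z n) :
    delta (pullback f φ) = pullback f (delta φ) := rfl

lemma IsBoundedC.pullback {f : Y → Z} {n : ℕ} {φ : Cochain Z n} :
    IsBoundedC φ → IsBoundedC (BddCohAct.pullback f φ)
  | ⟨C, hC⟩ => ⟨C, fun _ => hC _⟩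

lemma IsInvariant.pullback (f : Y →[G] Z) {n : ℕ} {φ : Cochain Z n} (h : IsInvariant G Z φ) :
    IsInvariant G Y (BddCohAct.pullback f φ) := fun g y => by
  simp only [BddCohAct.pullback, map_smul]
  exact h g _

lemma IsCobdry.pullback (f : Y →[G] Z) : ∀ {n : ℕ} {φ : Cochain Z n},
    IsCobdry G Z φ → IsCobdry G Y (BddCohAct.pullback f φ)
  | 0, _, h => by
    show BddCohAct.pullback f _ = 0
    rw [show _ = (0 : Cochain Z 0) from h]
    rfl
  | _ + 1, _, ⟨ψ, hb, hi, hδ⟩ => ⟨BddCohAct.pullback f ψ, hb.pullback, hi.pullback f, by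
    rw [delta_pullback, hδ]⟩

lemma snorm_pullback_le (f : Y → Z) {n : ℕ} (φ : Cochain Z n) : snorm (pullback f φ) ≤ snorm φ :=
  iSup_le fun y => le_iSup_of_le (fun i => f (y i)) le_rfl

noncomputable def pullbackZ (f : Y →[G] Z) (n : ℕ) : Zb G Z n →ₗ[ℝ] Zb G Y n where
  toFun z := ⟨pullback f z, z.2.1.pullback, z.2.2.1.pullback f, by
    rw [delta_pullback, z.2.2.2]
    rfl⟩
  map_add' _ _ := rfl
  map_smul' _ _ := rfl

noncomputable def pullbackH (f : Y →[G] Z) (n : ℕ) : Hb G Z n →ₗ[ℝ] Hb G Y n :=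
  (Bb G Z n).mapQ (Bb G Y n) (pullbackZ f n) fun _ hz => IsCobdry.pullback f hz

lemma pullbackH_id (n : ℕ) : pullbackH (MulActionHom.id G : Y →[G] Y) n = LinearMap.id :=
  Submodule.linearMap_qext _ rfl

lemma pullbackH_comp (f : Y →[G] Z) (g : W →[G] Y) (n : ℕ) :
    pullbackH (f.comp g) n = pullbackH g n ∘ₗ pullbackH f n :=
  Submodule.linearMap_qext _ rfl

lemma gnorm_pullbackH_le (f : Y →[G] Z) {n : ℕ} (α : Hb G Z n) :
    gnorm (pullbackH f n α) ≤ gnorm α := by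
  refine le_sInf ?_
  rintro _ ⟨z, rfl, rfl⟩
  exact sInf_le_of_le ⟨pullbackZ f n z, rfl, rfl⟩ (snorm_pullback_le f (z : Cochain Z n))

end Pullback

section Homotopy

variable {Y Z : Type*}

def skip (i m : ℕ) : ℕ := if m < i then m else m + 1

lemma val_succAbove_eq_skip {m : ℕ} (i : Fin (m + 1)) (j : Fin m) :
    ((i.succAbove j : Fin (m + 1)) : ℕ) = skip i j := by
  rw [skip, Fin.succAbove]
  split_ifs <;> simp_all [Fin.lt_def]

/- Tuples are read at natural-number indices, truncated at the last entry, so that the face and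
prism identities below become statements about `ℕ` that `omega` can check case by case. -/
def clamp {m : ℕ} (y : Fin (m + 1) → Y) (a : ℕ) : Y :=
  y ⟨min a m, by omega⟩

lemma clamp_val {m : ℕ} (y : Fin (m + 1) → Y) (j : Fin (m + 1)) : clamp y j = y j :=
  congrArg y (Fin.ext (min_eq_left (Nat.le_of_lt_succ j.isLt)))

lemma clamp_congr {m : ℕ} (y : Fin (m + 1) → Y) {a b : ℕ} (h : min a m = min b m) :
    clamp y a = clamp y b :=
  congrArg y (Fin.ext h)

def face {m : ℕ} (y : Fin (m + 2) → Y) (i : ℕ) : Fin (m + 1) → Y :=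
  fun j => clamp y (skip i j)

lemma clamp_face {m : ℕ} (y : Fin (m + 2) → Y) (i a : ℕ) :
    clamp (face y i) a = clamp y (skip i (min a m)) := rfl

lemma face_val {m : ℕ} (y : Fin (m + 2) → Y) (i : Fin (m + 2)) :
    face y i = fun j => y (i.succAbove j) := by
  funext j
  rw [face, ← val_succAbove_eq_skip, clamp_val]

def prism (f₁ f₂ : Y → Z) (k : ℕ) {n : ℕ} (y : Fin (n + 1) → Y) : Fin (n + 2) → Z :=
  fun j => if (j : ℕ) ≤ k then f₂ (clamp y j) else f₁ (clamp y (j - 1))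

lemma clamp_prism (f₁ f₂ : Y → Z) (k : ℕ) {n : ℕ} (y : Fin (n + 1) → Y) (a : ℕ) :
    clamp (prism f₁ f₂ k y) a =
      if min a (n + 1) ≤ k then f₂ (clamp y (min a (n + 1)))
      else f₁ (clamp y (min a (n + 1) - 1)) :=
  rfl

def interpolate (f₁ f₂ : Y → Z) (k : ℕ) {m : ℕ} (y : Fin m → Y) : Fin m → Z :=
  fun j => if (j : ℕ) < k then f₂ (y j) else f₁ (y j)

section FacesOfPrisms

variable (f₁ f₂ : Y → Z) {n : ℕ} (y : Fin (n + 2) → Y)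

lemma face_prism_self (k : ℕ) : face (prism f₁ f₂ k y) k = interpolate f₁ f₂ k y := by
  funext j
  have := j.isLt
  simp only [face, interpolate, clamp_prism, skip, ← clamp_val y]
  split_ifs <;> first | omega | (congr 1; exact clamp_congr y (by omega))

lemma face_prism_succ (k : ℕ) : face (prism f₁ f₂ k y) (k + 1) = interpolate f₁ f₂ (k + 1) y := by
  funext j
  have := j.isLt
  simp only [face, interpolate, clamp_prism, skip, ← clamp_val y]
  split_ifs <;> first | omega | (congr 1; exact clamp_congr y (by omega))

lemma face_prism_of_lt {i k : ℕ} (hik : i < k) (hk : k < n + 2) :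
    face (prism f₁ f₂ k y) i = prism f₁ f₂ (k - 1) (face y i) := by
  funext j
  have := j.isLt
  simp only [face, prism, clamp_prism, clamp_face, skip]
  split_ifs <;> first | omega | (congr 1; exact clamp_congr y (by omega))

lemma face_prism_of_succ_lt {i k : ℕ} (hki : k + 1 < i) (hi : i < n + 3) :
    face (prism f₁ f₂ k y) i = prism f₁ f₂ k (face y (i - 1)) := by
  funext j
  have := j.isLt
  simp only [face, prism, clamp_prism, clamp_face, skip]
  split_ifs <;> first | omega | (congr 1; exact clamp_congr y (by omega))

lemma interpolate_zero : interpolate f₁ f₂ 0 y = fun j => f₁ (y j) := by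
  funext j
  exact if_neg (Nat.not_lt_zero _)

lemma interpolate_top : interpolate f₁ f₂ (n + 2) y = fun j => f₂ (y j) := by
  funext j
  exact if_pos j.isLt

end FacesOfPrisms

lemma delta_apply_eq_sum_range {n : ℕ} (φ : Cochain Y n) (y : Fin (n + 2) → Y) :
    delta φ y = ∑ i ∈ range (n + 2), (-1 : ℝ) ^ i * φ (face y i) := by
  rw [← Fin.sum_univ_eq_sum_range (fun i => (-1 : ℝ) ^ i * φ (face y i))]
  simp only [face_val]
  rfl

def prismOp (f₁ f₂ : Y → Z) {n : ℕ} (φ : Cochain Z (n + 1)) : Cochain Y n :=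
  fun y => ∑ k ∈ range (n + 1), (-1 : ℝ) ^ k * φ (prism f₁ f₂ k y)

section PrismSums

variable (f₁ f₂ : Y → Z) {n : ℕ} (φ : Cochain Z (n + 1)) (y : Fin (n + 2) → Y)

lemma delta_prismOp_apply :
    delta (prismOp f₁ f₂ φ) y =
      ∑ i ∈ range (n + 2), ∑ k ∈ range (n + 1),
        (-1 : ℝ) ^ (i + k) * φ (prism f₁ f₂ k (face y i)) := by
  simp only [delta_apply_eq_sum_range, prismOp, mul_sum, pow_add, mul_assoc]

lemma prismOp_delta_apply :
    prismOp f₁ f₂ (delta φ) y =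
      ∑ k ∈ range (n + 2), ∑ i ∈ range (n + 3),
        (-1 : ℝ) ^ (k + i) * φ (face (prism f₁ f₂ k y) i) := by
  simp only [delta_apply_eq_sum_range, prismOp, mul_sum, pow_add, mul_assoc]

lemma sum_range_face_prism {k : ℕ} (hk : k < n + 2) :
    ∑ i ∈ range (n + 3), (-1 : ℝ) ^ (k + i) * φ (face (prism f₁ f₂ k y) i) =
      φ (interpolate f₁ f₂ k y) - φ (interpolate f₁ f₂ (k + 1) y) +
        ∑ i ∈ ((range (n + 3)).erase k).erase (k + 1),
          (-1 : ℝ) ^ (k + i) * φ (face (prism f₁ f₂ k y) i) := by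
  have hk₀ : k ∈ range (n + 3) := mem_range.mpr (by omega)
  have hk₁ : k + 1 ∈ (range (n + 3)).erase k := mem_erase.mpr ⟨by omega, mem_range.mpr (by omega)⟩
  have hsign : (-1 : ℝ) ^ (k + k) = 1 := by rw [← two_mul, pow_mul]; norm_num
  rw [← add_sum_erase _ _ hk₀, ← add_sum_erase _ _ hk₁, ← add_assoc, face_prism_self,
    face_prism_succ, hsign, ← add_assoc k k 1, pow_succ, hsign]
  ring

/- The faces `i < k` and `i > k + 1` of the `k`-th prism are prisms of faces of `y`; matching
them up cancels these terms against `delta ∘ prismOp`. -/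
lemma sum_offDiag_face_prism :
    ∑ k ∈ range (n + 2), ∑ i ∈ ((range (n + 3)).erase k).erase (k + 1),
        (-1 : ℝ) ^ (k + i) * φ (face (prism f₁ f₂ k y) i) =
      -∑ i ∈ range (n + 2), ∑ k ∈ range (n + 1),
        (-1 : ℝ) ^ (i + k) * φ (prism f₁ f₂ k (face y i)) := by
  rw [sum_sigma', sum_sigma', ← sum_neg_distrib]
  refine sum_nbij' (fun p => if p.2 < p.1 then ⟨p.2, p.1 - 1⟩ else ⟨p.2 - 1, p.1⟩)
    (fun q => if q.1 ≤ q.2 then ⟨q.2 + 1, q.1⟩ else ⟨q.2, q.1 + 1⟩) ?_ ?_ ?_ ?_ ?terms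
  all_goals
    rintro ⟨a, b⟩ h
    simp only [mem_sigma, mem_erase, mem_range] at h ⊢
  case terms =>
    split_ifs with hba
    · rw [face_prism_of_lt f₁ f₂ y hba h.1, show a + b = b + (a - 1) + 1 by omega, pow_succ]
      ring
    · rw [face_prism_of_succ_lt f₁ f₂ y (by omega) h.2.2.2, show a + b = b - 1 + a + 1 by omega,
        pow_succ]
      ring
  all_goals
    split_ifs <;> dsimp only at * <;>
      first | omega | (simp only [Sigma.mk.injEq, heq_eq_eq, and_true, true_and]; omega)

end PrismSums

theorem delta_prismOp_add_prismOp_delta (f₁ f₂ : Y → Z) {n : ℕ} (φ : Cochain Z (n + 1)) :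
    delta (prismOp f₁ f₂ φ) + prismOp f₁ f₂ (delta φ) = pullback f₁ φ - pullback f₂ φ := by
  funext y
  have htelescope : ∑ k ∈ range (n + 2),
      (φ (interpolate f₁ f₂ k y) - φ (interpolate f₁ f₂ (k + 1) y)) =
        pullback f₁ φ y - pullback f₂ φ y := by
    rw [sum_range_sub', interpolate_zero, interpolate_top]
    rfl
  rw [Pi.add_apply, delta_prismOp_apply, prismOp_delta_apply,
    sum_congr rfl fun k hk => sum_range_face_prism f₁ f₂ φ y (mem_range.mp hk), sum_add_distrib,
    htelescope, sum_offDiag_face_prism]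
  simp only [Pi.sub_apply]
  ring

lemma prismOp_zero (f₁ f₂ : Y → Z) {n : ℕ} : prismOp f₁ f₂ (0 : Cochain Z (n + 1)) = 0 := by
  funext y
  simp [prismOp]

lemma IsBoundedC.prismOp {f₁ f₂ : Y → Z} {n : ℕ} {φ : Cochain Z (n + 1)} :
    IsBoundedC φ → IsBoundedC (BddCohAct.prismOp f₁ f₂ φ)
  | ⟨C, hC⟩ => ⟨(n + 1) * C, fun y => calc
      |BddCohAct.prismOp f₁ f₂ φ y|
          ≤ ∑ k ∈ range (n + 1), |(-1 : ℝ) ^ k * φ (prism f₁ f₂ k y)| := abs_sum_le_sum_abs _ _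
      _ ≤ ∑ _k ∈ range (n + 1), C := sum_le_sum fun k _ => by simpa [abs_mul] using hC _
      _ = (n + 1) * C := by simp⟩

lemma eq_of_delta_eq_zero {z : Cochain Z 0} (hz : delta z = 0) (u v : Fin 1 → Z) : z u = z v := by
  have h := congrFun hz ![v 0, u 0]
  have hu : (fun _ : Fin 1 => u 0) = u := funext fun j => by fin_cases j; rfl
  have hv : (fun j : Fin 1 => ![v 0, u 0] (Fin.succAbove 1 j)) = v :=
    funext fun j => by fin_cases j; rfl
  simp [delta, Fin.sum_univ_succ, hu, hv] at h
  linarith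

variable {G : Type*} [Group G] [MulAction G Y] [MulAction G Z]

lemma prism_smul (f₁ f₂ : Y →[G] Z) (k : ℕ) {n : ℕ} (g : G) (y : Fin (n + 1) → Y) :
    prism f₁ f₂ k (fun i => g • y i) = fun j => g • prism f₁ f₂ k y j := by
  funext j
  simp only [prism]
  split_ifs <;> exact map_smul _ _ _

lemma IsInvariant.prismOp (f₁ f₂ : Y →[G] Z) {n : ℕ} {φ : Cochain Z (n + 1)}
    (h : IsInvariant G Z φ) : IsInvariant G Y (BddCohAct.prismOp f₁ f₂ φ) := fun g y =>
  sum_congr rfl fun k _ => by rw [prism_smul, h]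

lemma isCobdry_pullback_sub_pullback (f₁ f₂ : Y →[G] Z) :
    ∀ {n : ℕ} (z : Zb G Z n), IsCobdry G Y
      (pullback f₁ (z : Cochain Z n) - pullback f₂ (z : Cochain Z n))
  | 0, z => funext fun y => sub_eq_zero.mpr (eq_of_delta_eq_zero z.2.2.2 _ _)
  | _ + 1, z => ⟨prismOp f₁ f₂ z, z.2.1.prismOp, z.2.2.1.prismOp f₁ f₂, by
    rw [← delta_prismOp_add_prismOp_delta, z.2.2.2, prismOp_zero, add_zero]⟩

theorem pullbackH_eq (f₁ f₂ : Y →[G] Z) (n : ℕ) : pullbackH f₁ n = pullbackH f₂ n :=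
  Submodule.linearMap_qext _ <| LinearMap.ext fun z =>
    (Submodule.Quotient.eq _).mpr (isCobdry_pullback_sub_pullback f₁ f₂ z)

end Homotopy

section FreeAction

variable {G X : Type*} [Group G] [MulAction G X]

def orbitMap (x : X) : G →[G] X where
  toFun g := g • x
  map_smul' g h := mul_smul g h x

lemma eq_of_smul_eq_smul_of_free (hfree : ∀ (g : G) (x : X), g • x = x → g = 1) {g₁ g₂ : G}
    {y : X} (h : g₁ • y = g₂ • y) : g₁ = g₂ :=
  (inv_mul_eq_one.mp (hfree _ y (by rw [mul_smul, h, inv_smul_smul]))).symm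

lemma nonempty_mulActionHom_of_free (hfree : ∀ (g : G) (x : X), g • x = x → g = 1) :
    Nonempty (X →[G] G) := by
  have hrep : ∀ y : X, ∃ g : G, g • (Quotient.mk (MulAction.orbitRel G X) y).out = y := fun y =>
    MulAction.mem_orbit_symm.mp ((MulAction.orbitRel_apply).mp (Quotient.mk_out y))
  choose c hc using hrep
  refine ⟨⟨c, fun g y =>
    eq_of_smul_eq_smul_of_free hfree (y := (Quotient.mk (MulAction.orbitRel G X) y).out) ?_⟩⟩
  have hy : Quotient.mk (MulAction.orbitRel G X) (g • y) = Quotient.mk _ y :=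
    Quotient.sound (MulAction.mem_orbit y g)
  show c (g • y) • _ = (g * c y) • _
  rw [← hy, hc, hy, mul_smul, hc]

lemma exists_comp_orbitMap_eq_id (hfree : ∀ (g : G) (x : X), g • x = x → g = 1) (x : X) :
    ∃ p : X →[G] G, p.comp (orbitMap x) = MulActionHom.id G := by
  obtain ⟨c⟩ := nonempty_mulActionHom_of_free hfree
  refine ⟨⟨fun y => c y * (c x)⁻¹, fun g y => by simp [mul_assoc]⟩, ?_⟩
  ext g
  show c (g • x) * (c x)⁻¹ = g
  rw [map_smul, smul_eq_mul, mul_inv_cancel_right]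

end FreeAction

end BddCohAct

open BddCohAct

/-- If a group `Γ` acts freely on a set `X`, then for every basepoint `x ∈ X` the map induced
by `w_x` is an isometric isomorphism from `H^n_b(Γ ↷ X)` onto `H^n_b(Γ)` (the latter being the
bounded cohomology of the action of `Γ` on itself by left translations). -/
theorem Hw_bijective_isometric (Γ : Type*) (X : Type*) [Group Γ] [MulAction Γ X]
    (hfree : ∀ (g : Γ) (x : X), g • x = x → g = 1)
    (n : ℕ) (x : X) :
    Function.Bijective (Hw x n : Hb Γ X n →ₗ[ℝ] Hb Γ Γ n) ∧
      ∀ α : Hb Γ X n, gnorm (Hw x n α) = gnorm α := by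
  obtain ⟨p, hp⟩ := exists_comp_orbitMap_eq_id hfree x
  rw [show Hw x n = pullbackH (orbitMap x) n from rfl]
  have hpw : pullbackH p n ∘ₗ pullbackH (orbitMap x) n = LinearMap.id := by
    rw [← pullbackH_comp, pullbackH_eq _ (MulActionHom.id Γ), pullbackH_id]
  have hwp : pullbackH (orbitMap x) n ∘ₗ pullbackH p n = LinearMap.id := by
    rw [← pullbackH_comp, hp, pullbackH_id]
  refine ⟨Function.bijective_iff_has_inverse.mpr
      ⟨pullbackH p n, LinearMap.congr_fun hpw, LinearMap.congr_fun hwp⟩,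
    fun α => le_antisymm (gnorm_pullbackH_le _ α) ?_⟩
  calc gnorm α = gnorm (pullbackH p n (pullbackH (orbitMap x) n α)) := by
        rw [← LinearMap.comp_apply, hpw, LinearMap.id_apply]
    _ ≤ gnorm (pullbackH (orbitMap x) n α) := gnorm_pullbackH_le p _
end

section
/- Let α be a type equipped with a circular order, and define the orientation function ε : α × α × α → ℤ by ε(a,b,c) = 1 if b is strictly between a and c (sbtw a b c), ε(a,b,c) = −1 if c is strictly between a and b (sbtw a c b), and ε(a,b,c) = 0 otherwise. Then ε satisfies the homogeneous 2-cocycle identity: for all a, b, c, d ∈ α, ε(b,c,d) − ε(a,c,d) + ε(a,b,d) − ε(a,b,c) = 0. -/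
section Aux

variable {α : Type*} [CircularOrder α]

private lemma sbtwNope {x y z : α} (h : sbtw x y z) (h' : sbtw x z y) : False :=
  sbtw_asymm h h'.cyclic_left

private lemma sbtwOr {x y z : α} (hxy : x ≠ y) (hyz : y ≠ z) (hzx : z ≠ x)
    (h : ¬ sbtw x y z) : sbtw x z y := by
  have hzyx : btw z y x := by
    by_contra hb
    exact h (sbtw_of_btw_not_btw ((btw_total x y z).resolve_right hb) (by
      rwa [btw_cyclic (a := z)] at hb ⊢))
  have hxyz : ¬ btw x y z := by
    intro hb
    rcases hb.antisymm hzyx with h1 | h1 | h1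
    · exact hxy h1
    · exact hyz h1
    · exact hzx h1
  exact ((sbtw_of_btw_not_btw hzyx hxyz).cyclic_left).cyclic_left

private lemma cycle4 {x y z w : α} (h1 : sbtw x y z) (h2 : sbtw x z w) : sbtw y z w :=
  ((h2.cyclic_left.cyclic_left).trans_left h1).cyclic_left

end Aux

open Classical in
/-- The orientation function of a circular order: `ε a b c` is `1` if `b` lies strictly
between `a` and `c`, `-1` if `c` lies strictly between `a` and `b`, and `0` otherwise. -/
noncomputable def circEps {α : Type*} [CircularOrder α] (a b c : α) : ℤ :=
  if sbtw a b c then 1 else if sbtw a c b then -1 else 0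

section Aux2

variable {α : Type*} [CircularOrder α]

private lemma circEps_pos {a b c : α} (h : sbtw a b c) : circEps a b c = 1 := by
  simp [circEps, h]

private lemma circEps_neg {a b c : α} (h : sbtw a c b) : circEps a b c = -1 := by
  have h' : ¬ sbtw a b c := fun h2 => sbtwNope h2 h
  simp [circEps, h, h']

private lemma circEps_zero {a b c : α} (h1 : ¬ sbtw a b c) (h2 : ¬ sbtw a c b) :
    circEps a b c = 0 := by
  simp [circEps, h1, h2]

private lemma circEps_left {a c : α} : circEps a a c = 0 :=
  circEps_zero sbtw_irrefl_left sbtw_irrefl_left_right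

private lemma circEps_right {a b : α} : circEps a b b = 0 :=
  circEps_zero sbtw_irrefl_right sbtw_irrefl_right

private lemma circEps_outer {a b : α} : circEps a b a = 0 :=
  circEps_zero sbtw_irrefl_left_right sbtw_irrefl_left

private lemma circEps_swap {a b c : α} : circEps b a c = - circEps a b c := by
  by_cases h1 : sbtw a b c
  · rw [circEps_pos h1, circEps_neg h1.cyclic_left]
  · by_cases h2 : sbtw a c b
    · rw [circEps_neg h2, circEps_pos h2.cyclic_right]; norm_num
    · rw [circEps_zero h1 h2,
        circEps_zero (fun h => h2 h.cyclic_left) (fun h => h1 h.cyclic_right)]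
      rfl

private lemma circEps_swap23 {a b c : α} : circEps a c b = - circEps a b c := by
  by_cases h1 : sbtw a b c
  · rw [circEps_pos h1, circEps_neg h1]
  · by_cases h2 : sbtw a c b
    · rw [circEps_pos h2, circEps_neg h2]; norm_num
    · rw [circEps_zero h1 h2, circEps_zero h2 h1]; rfl

private lemma circEps_cyc {a b c : α} : circEps b c a = circEps a b c := by
  by_cases h1 : sbtw a b c
  · rw [circEps_pos h1, circEps_pos h1.cyclic_left]
  · by_cases h2 : sbtw a c b
    · rw [circEps_neg h2, circEps_neg h2.cyclic_right]
    · rw [circEps_zero h1 h2,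
        circEps_zero (fun h => h1 h.cyclic_right) (fun h => h2 h.cyclic_left)]

end Aux2

/-- The orientation function of a circular order satisfies the homogeneous 2-cocycle
identity. -/
theorem circEps_cocycle {α : Type*} [CircularOrder α] (a b c d : α) :
    circEps b c d - circEps a c d + circEps a b d - circEps a b c = 0 := by
  by_cases hab : a = b
  · subst hab; rw [circEps_left, circEps_left]; ring
  by_cases hac : a = c
  · subst hac
    rw [circEps_left, circEps_outer, (circEps_swap : circEps b a d = - circEps a b d)]
    ring
  by_cases had : a = d
  · subst had
    rw [circEps_outer, circEps_outer, (circEps_cyc : circEps b c a = circEps a b c)]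
    ring
  by_cases hbc : b = c
  · subst hbc; rw [circEps_left, circEps_right]; ring
  by_cases hbd : b = d
  · subst hbd
    rw [circEps_outer, circEps_right,
      (circEps_swap23 : circEps a c b = - circEps a b c)]
    ring
  by_cases hcd : c = d
  · subst hcd; rw [circEps_right, circEps_right]; ring
  -- now a, b, c, d are pairwise distinct
  by_cases p : sbtw a b c
  · by_cases r : sbtw a c d
    · -- forced: sbtw a b d and sbtw b c d
      have q : sbtw a b d := sbtw_trans_right p r
      have s : sbtw b c d := cycle4 p r
      rw [circEps_pos p, circEps_pos q, circEps_pos r, circEps_pos s]; ring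
    · have r' : sbtw a d c := sbtwOr hac hcd (fun h => had h.symm) r
      by_cases q : sbtw a b d
      · by_cases s : sbtw b c d
        · exact (sbtwNope r' ((cycle4 s q.cyclic_left).cyclic_left.cyclic_left)).elim
        · have s' : sbtw b d c := sbtwOr hbc hcd (fun h => hbd h.symm) s
          rw [circEps_pos p, circEps_pos q, circEps_neg r', circEps_neg s']; ring
      · have q' : sbtw a d b := sbtwOr hab hbd (fun h => had h.symm) q
        by_cases s : sbtw b c d
        · rw [circEps_pos p, circEps_neg q', circEps_neg r', circEps_pos s]; ring
        · exact absurd (cycle4 p.cyclic_right (sbtwOr hbc hcd (fun h => hbd h.symm) s).cyclic_right)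
            (fun h => sbtwNope h q')
  · have p' : sbtw a c b := sbtwOr hab hbc (fun h => hac h.symm) p
    by_cases r : sbtw a c d
    · by_cases q : sbtw a b d
      · by_cases s : sbtw b c d
        · exact absurd (sbtw_trans_right s q.cyclic_left) (sbtw_asymm p')
        · have s' : sbtw b d c := sbtwOr hbc hcd (fun h => hbd h.symm) s
          rw [circEps_neg p', circEps_pos q, circEps_pos r, circEps_neg s']; ring
      · have q' : sbtw a d b := sbtwOr hab hbd (fun h => had h.symm) q
        by_cases s : sbtw b c d
        · rw [circEps_neg p', circEps_neg q', circEps_pos r, circEps_pos s]; ring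
        · have s' : sbtw b d c := sbtwOr hbc hcd (fun h => hbd h.symm) s
          exact absurd (sbtw_trans_right r.cyclic_right s'.cyclic_left).cyclic_left
            (fun h => sbtwNope h q')
    · -- forced: sbtw a d b and sbtw b d c
      have r' : sbtw a d c := sbtwOr hac hcd (fun h => had h.symm) r
      have q0 : sbtw a d b := sbtw_trans_right r' p'
      have s0 : sbtw d c b := cycle4 r' p'
      rw [circEps_neg p', circEps_neg q0, circEps_neg r',
        circEps_neg (s0.cyclic_left.cyclic_left : sbtw b d c)]
      ring
end

section
/- For a ∈ ℝ with 0 < a < 1 define f_a : ℤ → ℝ by f_a(n) = |n|^a. Then: (i) each f_a is Lipschitz; (ii) for each a ∈ (0,1) and n ∈ ℕ, letting (f_a)_n : ℤ → ℝ be the truncation given by (f_a)_n(x) = f_a(x) − f_a(−n) for x ≤ −n, (f_a)_n(x) = 0 for −n ≤ x ≤ n, and (f_a)_n(x) = f_a(x) − f_a(n) for x ≥ n, for every ε > 0 there exists N such that for all n ≥ N the map (f_a)_n is Lipschitz with constant ε; (iii) the family {f_a : a ∈ (0,1)} is linearly independent modulo bounded functions: for any distinct a₁,…,a_k ∈ (0,1)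 and real numbers c₁,…,c_k not all zero, the function Σ_{i=1}^k c_i f_{a_i} is unbounded on ℤ. -/
/-- The function `n ↦ |n|^a` on the integers. -/
noncomputable def fpow (a : ℝ) (n : ℤ) : ℝ := |(n : ℝ)| ^ a

/-- The truncation of `fpow a` outside `[-n, n]`. -/
noncomputable def fpowTrunc (a : ℝ) (n : ℕ) (x : ℤ) : ℝ :=
  if x ≤ -(n : ℤ) then fpow a x - fpow a (-(n : ℤ))
  else if (n : ℤ) ≤ x then fpow a x - fpow a (n : ℤ)
  else 0

open Real Filter

private lemma rpow_sub_le' {a u v : ℝ} (ha : 0 ≤ a) (ha1 : a ≤ 1) (hv : 0 ≤ v) (hvu : v ≤ u) :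
    u ^ a - v ^ a ≤ (u - v) ^ a := by
  have h := NNReal.rpow_add_le_add_rpow (v.toNNReal) ((u - v).toNNReal) ha ha1
  have h' : ((v.toNNReal : ℝ) + ((u - v).toNNReal : ℝ)) ^ a
      ≤ (v.toNNReal : ℝ) ^ a + ((u - v).toNNReal : ℝ) ^ a := by
    have := NNReal.coe_le_coe.mpr h
    push_cast at this
    simpa using this
  rw [Real.coe_toNNReal _ hv, Real.coe_toNNReal _ (sub_nonneg.mpr hvu)] at h'
  have : v + (u - v) = u := by ring
  rw [this] at h'
  linarith

private lemma abs_rpow_sub_le' {a u v : ℝ} (ha : 0 ≤ a) (ha1 : a ≤ 1) (hu : 0 ≤ u)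
    (hv : 0 ≤ v) : |u ^ a - v ^ a| ≤ |u - v| ^ a := by
  rcases le_total v u with h | h
  · rw [abs_of_nonneg (sub_nonneg.mpr (Real.rpow_le_rpow hv h ha)),
      abs_of_nonneg (sub_nonneg.mpr h)]
    exact rpow_sub_le' ha ha1 hv h
  · rw [abs_sub_comm, abs_sub_comm u v,
      abs_of_nonneg (sub_nonneg.mpr (Real.rpow_le_rpow hu h ha)),
      abs_of_nonneg (sub_nonneg.mpr h)]
    exact rpow_sub_le' ha ha1 hu h

private lemma lemA' {a : ℝ} (ha : 0 < a) (ha1 : a < 1) {c x y : ℝ} (hc : 0 < c) (hx : c ≤ x)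
    (hy : c ≤ y) : |x ^ a - y ^ a| ≤ (a * c ^ (a - 1)) * |x - y| := by
  have hs : Convex ℝ (Set.Ici c) := convex_Ici c
  have hderiv : ∀ t ∈ Set.Ici c, HasDerivWithinAt (fun t : ℝ => t ^ a)
      (a * t ^ (a - 1)) (Set.Ici c) t := by
    intro t ht
    exact (Real.hasDerivAt_rpow_const (Or.inl (ne_of_gt (lt_of_lt_of_le hc ht)))).hasDerivWithinAt
  have hbound : ∀ t ∈ Set.Ici c, ‖a * t ^ (a - 1)‖ ≤ a * c ^ (a - 1) := by
    intro t ht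
    rw [Real.norm_eq_abs, abs_mul, abs_of_nonneg ha.le,
      abs_of_nonneg (Real.rpow_nonneg (le_trans hc.le ht) _)]
    exact mul_le_mul_of_nonneg_left
      (Real.rpow_le_rpow_of_nonpos hc ht (by linarith)) ha.le
  have := hs.norm_image_sub_le_of_norm_hasDerivWithin_le hderiv hbound hy hx
  simpa [Real.norm_eq_abs] using this

private lemma trunc_eq' {a : ℝ} (n : ℕ) (x : ℤ) :
    fpowTrunc a n x = (max |(x : ℝ)| (n : ℝ)) ^ a - (n : ℝ) ^ a := by
  unfold fpowTrunc fpow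
  split_ifs with h1 h2
  · have hx : (x : ℝ) ≤ -(n : ℝ) := by exact_mod_cast h1
    have : (n : ℝ) ≤ |(x : ℝ)| := by
      rw [le_abs]; right; linarith
    rw [max_eq_left this]
    congr 1
    push_cast [abs_neg, Nat.abs_cast]
    rfl
  · have hx : (n : ℝ) ≤ (x : ℝ) := by exact_mod_cast h2
    have : (n : ℝ) ≤ |(x : ℝ)| := le_trans hx (le_abs_self _)
    rw [max_eq_left this]
    congr 1
    push_cast [Nat.abs_cast]
    rfl
  · push_neg at h1 h2
    have hx1 : -(n : ℝ) < (x : ℝ) := by exact_mod_cast h1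
    have hx2 : (x : ℝ) < (n : ℝ) := by exact_mod_cast h2
    rw [max_eq_right (by rw [abs_le]; constructor <;> linarith), sub_self]

/-- For `0 < a < 1`: (i) `n ↦ |n|^a` is Lipschitz on `ℤ`; (ii) the Lipschitz constants of its
truncations tend to `0`; (iii) the family `{ |n|^a : a ∈ (0,1) }` is linearly independent
modulo bounded functions: any nontrivial finite linear combination is unbounded on `ℤ`. -/
theorem fpow_lipschitz_trunc_unbounded :
    (∀ a ∈ Set.Ioo (0 : ℝ) 1, ∃ K : ℝ, 0 ≤ K ∧
        ∀ m n : ℤ, |fpow a m - fpow a n| ≤ K * |(m : ℝ) - (n : ℝ)|) ∧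
      (∀ a ∈ Set.Ioo (0 : ℝ) 1, ∀ ε : ℝ, 0 < ε → ∃ N : ℕ, ∀ n ≥ N,
        ∀ x y : ℤ, |fpowTrunc a n x - fpowTrunc a n y| ≤ ε * |(x : ℝ) - (y : ℝ)|) ∧
      (∀ (k : ℕ) (a : Fin k → ℝ), (∀ i, a i ∈ Set.Ioo (0 : ℝ) 1) →
        Function.Injective a → ∀ c : Fin k → ℝ, c ≠ 0 →
          ¬ ∃ C : ℝ, ∀ n : ℤ, |∑ i, c i * fpow (a i) n| ≤ C) := by
  refine ⟨?_, ?_, ?_⟩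
  · -- Part (i): Lipschitz with constant 1
    rintro a ⟨ha0, ha1⟩
    refine ⟨1, zero_le_one, fun m n => ?_⟩
    rcases eq_or_ne m n with rfl | h
    · simp
    have h1 : (1 : ℝ) ≤ |(m : ℝ) - (n : ℝ)| := by
      have := Int.one_le_abs (sub_ne_zero.mpr h)
      have : (1 : ℝ) ≤ |((m - n : ℤ) : ℝ)| := by exact_mod_cast this
      simpa [abs_sub_comm] using this
    calc |fpow a m - fpow a n| ≤ |(|(m : ℝ)| - |(n : ℝ)|)| ^ a :=
          abs_rpow_sub_le' ha0.le ha1.le (abs_nonneg _) (abs_nonneg _)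
      _ ≤ |(m : ℝ) - (n : ℝ)| ^ a :=
          Real.rpow_le_rpow (abs_nonneg _) (abs_abs_sub_abs_le_abs_sub _ _) ha0.le
      _ ≤ |(m : ℝ) - (n : ℝ)| ^ (1 : ℝ) :=
          Real.rpow_le_rpow_of_exponent_le h1 ha1.le
      _ = 1 * |(m : ℝ) - (n : ℝ)| := by rw [Real.rpow_one, one_mul]
  · -- Part (ii): truncation Lipschitz constants tend to 0
    rintro a ⟨ha0, ha1⟩ ε hε
    have hlim : Tendsto (fun N : ℕ => a * (N : ℝ) ^ (a - 1)) atTop (nhds 0) := by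
      have h1 : Tendsto (fun t : ℝ => t ^ (a - 1)) atTop (nhds 0) := by
        have := tendsto_rpow_neg_atTop (by linarith : (0 : ℝ) < 1 - a)
        simpa [neg_sub] using this
      have := (h1.comp tendsto_natCast_atTop_atTop).const_mul a
      simpa using this
    obtain ⟨N0, hN0⟩ := eventually_atTop.mp (hlim.eventually_lt_const hε)
    refine ⟨max N0 1, fun n hn x y => ?_⟩
    have hn1 : 1 ≤ n := le_trans (le_max_right _ _) hn
    have hnr : (1 : ℝ) ≤ (n : ℝ) := by exact_mod_cast hn1
    have hε' : a * (n : ℝ) ^ (a - 1) < ε := hN0 n (le_trans (le_max_left _ _) hn)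
    rw [trunc_eq', trunc_eq']
    have key := lemA' ha0 ha1 (lt_of_lt_of_le zero_lt_one hnr)
      (le_max_right |(x : ℝ)| (n : ℝ)) (le_max_right |(y : ℝ)| (n : ℝ))
    have h2 : |max |(x : ℝ)| (n : ℝ) - max |(y : ℝ)| (n : ℝ)| ≤ |(x : ℝ) - (y : ℝ)| :=
      (abs_max_sub_max_le_abs _ _ _).trans (abs_abs_sub_abs_le_abs_sub _ _)
    calc |((max |(x : ℝ)| (n : ℝ)) ^ a - (n : ℝ) ^ a)
          - ((max |(y : ℝ)| (n : ℝ)) ^ a - (n : ℝ) ^ a)|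
        = |(max |(x : ℝ)| (n : ℝ)) ^ a - (max |(y : ℝ)| (n : ℝ)) ^ a| := by ring_nf
      _ ≤ (a * (n : ℝ) ^ (a - 1)) * |max |(x : ℝ)| (n : ℝ) - max |(y : ℝ)| (n : ℝ)| := key
      _ ≤ ε * |(x : ℝ) - (y : ℝ)| := mul_le_mul hε'.le h2 (abs_nonneg _) hε.le
  · -- Part (iii): linear independence modulo bounded functions
    rintro k a ha hinj c hc ⟨C, hC⟩
    obtain ⟨i0, hi0⟩ := Function.ne_iff.mp hc
    have hne : (Finset.univ.filter fun i => c i ≠ 0).Nonempty :=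
      ⟨i0, by simpa using hi0⟩
    obtain ⟨j, hjs, hjmax⟩ := Finset.exists_max_image _ a hne
    have hcj : c j ≠ 0 := by simpa using (Finset.mem_filter.mp hjs).2
    set F : ℕ → ℝ := fun n => ∑ i, c i * (n : ℝ) ^ (a i - a j) with hF
    have hFlim : Tendsto F atTop (nhds (c j)) := by
      have hsum : Tendsto F atTop (nhds (∑ i, if i = j then c j else 0)) := by
        apply tendsto_finset_sum
        intro i _
        by_cases hij : i = j
        · subst hij
          simp only [if_pos rfl, sub_self]
          simpa [Real.rpow_zero] using
            tendsto_const_nhds (x := c i) (f := atTop (α := ℕ))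
        · simp only [if_neg hij]
          by_cases hci : c i = 0
          · simpa [hci] using tendsto_const_nhds (x := (0 : ℝ)) (f := atTop (α := ℕ))
          · have hij' : a i < a j := by
              have hle : a i ≤ a j := hjmax i (by simp [hci])
              exact lt_of_le_of_ne hle (fun h => hij (hinj h))
            have h1 : Tendsto (fun t : ℝ => t ^ (a i - a j)) atTop (nhds 0) := by
              have := tendsto_rpow_neg_atTop (by linarith : (0 : ℝ) < a j - a i)
              simpa [neg_sub] using this
            have := (h1.comp tendsto_natCast_atTop_atTop).const_mul (c i)
            simpa using this
      simpa using hsum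
    have hFlim0 : Tendsto F atTop (nhds 0) := by
      have hg : Tendsto (fun n : ℕ => C * ((n : ℝ) ^ (a j))⁻¹) atTop (nhds 0) := by
        have h1 : Tendsto (fun t : ℝ => t ^ (a j)) atTop atTop :=
          tendsto_rpow_atTop (ha j).1
        have := ((h1.comp tendsto_natCast_atTop_atTop).inv_tendsto_atTop).const_mul C
        simpa [Function.comp] using this
      apply squeeze_zero_norm' _ hg
      filter_upwards [eventually_ge_atTop 1] with n hn
      have hnr : (0 : ℝ) < (n : ℝ) := by exact_mod_cast hn
      have hFn : F n = (∑ i, c i * (n : ℝ) ^ (a i)) * ((n : ℝ) ^ (a j))⁻¹ := by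
        rw [hF, Finset.sum_mul]
        apply Finset.sum_congr rfl
        intro i _
        rw [Real.rpow_sub hnr, div_eq_mul_inv, mul_assoc]
      have hCn := hC (n : ℤ)
      have hfp : ∀ i, fpow (a i) ((n : ℕ) : ℤ) = (n : ℝ) ^ (a i) := by
        intro i
        unfold fpow
        push_cast
        rw [abs_of_nonneg hnr.le]
      rw [Real.norm_eq_abs, hFn, abs_mul, abs_inv, abs_of_nonneg (Real.rpow_nonneg hnr.le _)]
      have hC' : |∑ i, c i * (n : ℝ) ^ (a i)| ≤ C := by
        simpa [hfp] using hCn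
      exact mul_le_mul_of_nonneg_right hC' (by positivity)
    exact hcj (tendsto_nhds_unique hFlim hFlim0)
end
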